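/- If the list X ++ [i] ++ Y is an efficiency-maximizing assignment of some fixed number of slots over a bidder set containing both i and j, where j does not appear in the assignment, e_j ≥ e_i, and e_j/(1−q_j) ≥ e_i/(1−q_i), then the list X ++ [j] ++ Y (substituting j for i) has efficiency at least as large, hence is also optimal. -/

import Mathlib

noncomputable section

/-- Efficiency of an ordered list of ads `(e, q)`. -/
def eff : List (ℝ × ℝ) → ℝ
  | [] => 0
  | a :: L => a.1 + a.2 * eff L

/-- Product of continuation probabilities of a list of ads. -/
def qprod (L : List (ℝ × ℝ)) : ℝ := (L.map Prod.snd).prod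

/-!
Writing the assignment as `X ++ [a] ++ Y`, its efficiency is
`eff X + qprod X * (e_a + q_a * eff Y)`, so only the affine map `t ↦ e_a + q_a t`
evaluated at `t = eff Y` depends on the bidder in the middle slot. Optimality of
`X ++ [i] ++ Y` against `X ++ Y` gives `eff Y ≤ e_i / (1 - q_i)` (when `qprod X > 0`).
The difference of the affine maps of `j` and `i` is nonnegative at `t = 0` because
`e_j ≥ e_i`, and at `t = e_i / (1 - q_i)` because `e_j / (1 - q_j) ≥ e_i / (1 - q_i)`;
hence it is nonnegative on the whole interval, in particular at `eff Y`.
-/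

lemma eff_append (X Y : List (ℝ × ℝ)) : eff (X ++ Y) = eff X + qprod X * eff Y := by
  induction X with
  | nil => simp [eff, qprod]
  | cons a X ih =>
    simp only [List.cons_append, eff, qprod, List.map_cons, List.prod_cons] at *
    rw [ih]
    ring

lemma eff_append_singleton_append (X Y : List (ℝ × ℝ)) (a : ℝ × ℝ) :
    eff (X ++ [a] ++ Y) = eff X + qprod X * (a.1 + a.2 * eff Y) := by
  rw [List.append_assoc, eff_append]
  simp [eff]

lemma qprod_nonneg {L : List (ℝ × ℝ)} (h : ∀ a ∈ L, 0 ≤ a.2) : 0 ≤ qprod L :=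
  List.prod_nonneg fun _ hq => by
    obtain ⟨a, ha, rfl⟩ := List.mem_map.mp hq
    exact h a ha

lemma eff_nonneg {L : List (ℝ × ℝ)} (h : ∀ a ∈ L, 0 ≤ a.1 ∧ 0 ≤ a.2) : 0 ≤ eff L := by
  induction L with
  | nil => simp [eff]
  | cons a L ih =>
    have ha := h a List.mem_cons_self
    have hL := ih fun b hb => h b (List.mem_cons_of_mem a hb)
    simp only [eff]
    nlinarith [mul_nonneg ha.2 hL]

lemma add_mul_le_add_mul_of_mul_one_sub_le {ei qi ej qj t : ℝ} (hqi : qi < 1)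
    (he : ei ≤ ej) (hratio : ei * (1 - qj) ≤ ej * (1 - qi))
    (ht : 0 ≤ t) (hti : t * (1 - qi) ≤ ei) :
    ei + qi * t ≤ ej + qj * t := by
  rcases le_or_gt qi qj with hq | hq
  · nlinarith
  · nlinarith [mul_le_mul_of_nonneg_left hti (sub_nonneg.mpr hq.le)]

lemma eff_mul_one_sub_le_of_eff_append_le {X Y : List (ℝ × ℝ)} {i : ℝ × ℝ}
    (hX : 0 < qprod X) (hopt : eff (X ++ Y) ≤ eff (X ++ [i] ++ Y)) :
    eff Y * (1 - i.2) ≤ i.1 := by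
  rw [eff_append, eff_append_singleton_append] at hopt
  have hmid : qprod X * eff Y ≤ qprod X * (i.1 + i.2 * eff Y) := by linarith
  nlinarith [(mul_le_mul_iff_right₀ hX).mp hmid]

lemma eff_le_eff_of_dominates {X Y : List (ℝ × ℝ)} {i j : ℝ × ℝ}
    (hX : 0 ≤ qprod X) (hY : 0 ≤ eff Y) (hi : i.2 < 1)
    (he : i.1 ≤ j.1) (hratio : i.1 * (1 - j.2) ≤ j.1 * (1 - i.2))
    (hopt : eff (X ++ Y) ≤ eff (X ++ [i] ++ Y)) :
    eff (X ++ [i] ++ Y) ≤ eff (X ++ [j] ++ Y) := by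
  rw [eff_append_singleton_append, eff_append_singleton_append]
  rcases hX.eq_or_lt with hX0 | hXpos
  · simp [← hX0]
  · have hmid := add_mul_le_add_mul_of_mul_one_sub_le hi he hratio hY
      (eff_mul_one_sub_le_of_eff_append_le hXpos hopt)
    exact add_le_add_right (mul_le_mul_of_nonneg_left hmid hXpos.le) _

theorem dominance_substitution_optimal_general
    (C : Finset (ℝ × ℝ))
    (hC : ∀ a ∈ C, 0 ≤ a.1 ∧ 0 ≤ a.2 ∧ a.2 < 1)
    (X Y : List (ℝ × ℝ)) (i j : ℝ × ℝ)
    (hmem : ∀ a ∈ X ++ [i] ++ Y, a ∈ C)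
    (hnd : (X ++ [i] ++ Y).Nodup)
    (hjC : j ∈ C)
    (he : j.1 ≥ i.1)
    (ha : j.1 / (1 - j.2) ≥ i.1 / (1 - i.2))
    (hopt : ∀ T : List (ℝ × ℝ), T.Nodup → (∀ a ∈ T, a ∈ C) →
      T.length ≤ (X ++ [i] ++ Y).length → eff T ≤ eff (X ++ [i] ++ Y)) :
    eff (X ++ [j] ++ Y) ≥ eff (X ++ [i] ++ Y) ∧
    (∀ T : List (ℝ × ℝ), T.Nodup → (∀ a ∈ T, a ∈ C) →
      T.length ≤ (X ++ [j] ++ Y).length → eff T ≤ eff (X ++ [j] ++ Y)) := by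
  have hi := (hC i (hmem i (by simp))).2.2
  have hj := (hC j hjC).2.2
  have hratio : i.1 * (1 - j.2) ≤ j.1 * (1 - i.2) :=
    (div_le_div_iff₀ (sub_pos.mpr hi) (sub_pos.mpr hj)).mp ha
  have hsub : (X ++ Y).Sublist (X ++ [i] ++ Y) := by simp
  have hXY := hopt (X ++ Y) (hnd.sublist hsub) (fun a h => hmem a (hsub.mem h)) hsub.length_le
  have hX : 0 ≤ qprod X := qprod_nonneg fun a h => (hC a (hmem a (by simp [h]))).2.1
  have hY : 0 ≤ eff Y := eff_nonneg fun a h =>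
    ⟨(hC a (hmem a (by simp [h]))).1, (hC a (hmem a (by simp [h]))).2.1⟩
  have hsubst := eff_le_eff_of_dominates hX hY hi he hratio hXY
  refine ⟨hsubst, fun T hT hTC hTlen => (hopt T hT hTC (by simpa using hTlen)).trans hsubst⟩

/-- Theorem 2 (bidder dominance): if `X ++ [i] ++ Y` is an optimal assignment over a
bidder set `C` containing an unassigned bidder `j` with `e_j ≥ e_i` and
`a_j ≥ a_i`, then substituting `j` for `i` gives an assignment that is no worse,
hence also optimal. -/
theorem dominance_substitution_optimal
    (C : Finset (ℝ × ℝ))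
    (hC : ∀ a ∈ C, 0 ≤ a.1 ∧ 0 ≤ a.2 ∧ a.2 < 1)
    (X Y : List (ℝ × ℝ)) (i j : ℝ × ℝ)
    (hmem : ∀ a ∈ X ++ [i] ++ Y, a ∈ C)
    (hnd : (X ++ [i] ++ Y).Nodup)
    (hjC : j ∈ C) (hjnot : j ∉ X ++ [i] ++ Y)
    (he : j.1 ≥ i.1)
    (ha : j.1 / (1 - j.2) ≥ i.1 / (1 - i.2))
    (hopt : ∀ T : List (ℝ × ℝ), T.Nodup → (∀ a ∈ T, a ∈ C) →
      T.length ≤ (X ++ [i] ++ Y).length → eff T ≤ eff (X ++ [i] ++ Y)) :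
    eff (X ++ [j] ++ Y) ≥ eff (X ++ [i] ++ Y) ∧
    (∀ T : List (ℝ × ℝ), T.Nodup → (∀ a ∈ T, a ∈ C) →
      T.length ≤ (X ++ [j] ++ Y).length → eff T ≤ eff (X ++ [j] ++ Y)) :=
  dominance_substitution_optimal_general C hC X Y i j hmem hnd hjC he ha hopt
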